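/- arXiv:0908.0533 — 3 statements merged into one kernel-verified Lean document; each statement's English description precedes it below -/
import Mathlib

section
/- Let f : ℤ_p → ℚ_p be given by a power series converging on ℤ_p that is not identically zero. Then f has only finitely many zeros in ℤ_p. -/
/-!
Strassmann's argument. Let `N` be the last index at which `‖aₙ‖` is maximal. If `N = 0`, the
constant term strictly dominates all other terms of `f z = ∑ aₙ zⁿ` on the closed unit ball, so
`f` has no zero there. If `N > 0` and `f y = 0`, then `f z = (z - y) g z` for a power series `g`
whose coefficients still tend to `0` and whose last maximal coefficient sits at index `N - 1`.
Induction on `N` shows that `f` has at most `N` zeros in the closed unit ball.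
-/

open Filter Finset Topology

section Ultrametric

variable {E : Type*} [NormedAddCommGroup E]

lemma exists_forall_norm_le_of_tendsto_zero {c : ℕ → E} (hc : Tendsto c atTop (𝓝 0)) :
    ∃ N, ∀ n, ‖c n‖ ≤ ‖c N‖ := by
  by_cases h : ∀ n, c n = 0
  · exact ⟨0, fun n => by simp [h]⟩
  push Not at h
  obtain ⟨k, hk⟩ := h
  refine continuous_of_discreteTopology.exists_forall_ge' k ?_
  rw [cocompact_eq_atTop]
  exact (tendsto_zero_iff_norm_tendsto_zero.mp hc).eventually (ge_mem_nhds (norm_pos_iff.mpr hk))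

variable [IsUltrametricDist E]

lemma IsUltrametricDist.norm_tsum_lt_of_forall_norm_lt {c : ℕ → E} {r : ℝ}
    (h : ∀ n, ‖c n‖ < r) : ‖∑' n, c n‖ < r := by
  by_cases hc : Summable c
  · obtain ⟨N, hN⟩ := exists_forall_norm_le_of_tendsto_zero
      (Nat.cofinite_eq_atTop ▸ hc.tendsto_cofinite_zero)
    exact (norm_tsum_le_of_forall_le_of_nonneg (norm_nonneg _) hN).trans_lt (h N)
  · rw [tsum_eq_zero_of_not_summable hc, norm_zero]
    exact (norm_nonneg _).trans_lt (h 0)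

lemma IsUltrametricDist.norm_tsum_eq_of_forall_norm_succ_lt {c : ℕ → E} (hc : Summable c)
    (h : ∀ n, ‖c (n + 1)‖ < ‖c 0‖) : ‖∑' n, c n‖ = ‖c 0‖ := by
  have htail : ‖∑' n, c (n + 1)‖ < ‖c 0‖ := norm_tsum_lt_of_forall_norm_lt h
  rw [hc.tsum_eq_zero_add, norm_add_eq_max_of_norm_ne_norm htail.ne', max_eq_left htail.le]

end Ultrametric

lemma Nat.tendsto_add_cofinite_atTop : Tendsto (fun q : ℕ × ℕ => q.1 + q.2) cofinite atTop := by
  rw [← Nat.cofinite_eq_atTop]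
  refine Tendsto.cofinite_of_finite_preimage_singleton fun k => ?_
  have hfiber : (fun q : ℕ × ℕ => q.1 + q.2) ⁻¹' {k} = ↑(antidiagonal k) := by
    ext
    simp
  rw [hfiber]
  infer_instance

lemma sub_mul_sum_antidiagonal_pow_mul_pow {R : Type*} [CommRing R] (x y : R) (k : ℕ) :
    (x - y) * ∑ q ∈ antidiagonal k, x ^ q.1 * y ^ q.2 = x ^ (k + 1) - y ^ (k + 1) := by
  rw [Nat.sum_antidiagonal_eq_sum_range_succ_mk, ← geom_sum₂_mul, mul_comm]
  simp

section PowerSeries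

variable {K : Type*} [NormedField K] {a : ℕ → K} {y z : K}

lemma norm_mul_pow_le (c : K) (hy : ‖y‖ ≤ 1) (n : ℕ) : ‖c * y ^ n‖ ≤ ‖c‖ := by
  rw [norm_mul, norm_pow]
  exact mul_le_of_le_one_right (norm_nonneg c) (pow_le_one₀ (norm_nonneg y) hy)

lemma summable_mul_pow_of_tendsto_zero [IsUltrametricDist K] [CompleteSpace K]
    (ha : Tendsto a atTop (𝓝 0)) (hy : ‖y‖ ≤ 1) : Summable fun n => a n * y ^ n := by
  refine NonarchimedeanAddGroup.summable_of_tendsto_cofinite_zero ?_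
  rw [Nat.cofinite_eq_atTop]
  exact squeeze_zero_norm (fun n => norm_mul_pow_le _ hy n)
    (tendsto_zero_iff_norm_tendsto_zero.mp ha)

lemma summable_shift_mul_pow [IsUltrametricDist K] [CompleteSpace K]
    (ha : Tendsto a atTop (𝓝 0)) (hy : ‖y‖ ≤ 1) (j : ℕ) :
    Summable fun m => a (m + j + 1) * y ^ m :=
  summable_mul_pow_of_tendsto_zero (ha.comp (tendsto_add_atTop_nat (j + 1))) hy

/-- If `f z = ∑ aₙ zⁿ`, then `(f z - f y) / (z - y) = ∑ⱼ (diffQuotCoeff a y j) zʲ`. -/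
noncomputable def diffQuotCoeff (a : ℕ → K) (y : K) (j : ℕ) : K :=
  ∑' m, a (m + j + 1) * y ^ m

lemma norm_diffQuotCoeff_lt [IsUltrametricDist K] {j : ℕ} {r : ℝ} (hy : ‖y‖ ≤ 1)
    (h : ∀ n, j < n → ‖a n‖ < r) : ‖diffQuotCoeff a y j‖ < r :=
  IsUltrametricDist.norm_tsum_lt_of_forall_norm_lt fun m =>
    (norm_mul_pow_le _ hy m).trans_lt (h _ (by omega))

lemma tendsto_diffQuotCoeff [IsUltrametricDist K] (ha : Tendsto a atTop (𝓝 0)) (hy : ‖y‖ ≤ 1) :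
    Tendsto (diffQuotCoeff a y) atTop (𝓝 0) := by
  refine NormedAddGroup.tendsto_nhds_zero.mpr fun ε hε => ?_
  obtain ⟨n₀, hn₀⟩ := eventually_atTop.mp (NormedAddGroup.tendsto_nhds_zero.mp ha ε hε)
  exact eventually_atTop.mpr
    ⟨n₀, fun j hj => norm_diffQuotCoeff_lt hy fun n hn => hn₀ n (by omega)⟩

variable [IsUltrametricDist K] [CompleteSpace K]

lemma tsum_diffQuotCoeff_mul_pow (ha : Tendsto a atTop (𝓝 0)) (hy : ‖y‖ ≤ 1) (hz : ‖z‖ ≤ 1) :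
    ∑' j, diffQuotCoeff a y j * z ^ j
      = ∑' k, a (k + 1) * ∑ q ∈ antidiagonal k, z ^ q.1 * y ^ q.2 := by
  set u : ℕ × ℕ → K := fun q => a (q.2 + q.1 + 1) * y ^ q.2 * z ^ q.1
  have hu : Summable u := by
    refine NonarchimedeanAddGroup.summable_of_tendsto_cofinite_zero <|
      squeeze_zero_norm (fun q => ?_) <| (tendsto_zero_iff_norm_tendsto_zero.mp ha).comp <|
        (tendsto_add_atTop_nat 1).comp Nat.tendsto_add_cofinite_atTop
    show ‖a (q.2 + q.1 + 1) * y ^ q.2 * z ^ q.1‖ ≤ ‖a (q.1 + q.2 + 1)‖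
    rw [add_comm q.2]
    exact (norm_mul_pow_le _ hz _).trans (norm_mul_pow_le _ hy _)
  have hrow (j : ℕ) : Summable fun m => u (j, m) :=
    (summable_shift_mul_pow ha hy j).mul_right (z ^ j)
  calc ∑' j, diffQuotCoeff a y j * z ^ j = ∑' j, ∑' m, u (j, m) := by
        simp only [diffQuotCoeff, u, tsum_mul_right]
    _ = ∑' q, u q := (hu.tsum_prod' hrow).symm
    _ = ∑' k, ∑ q ∈ antidiagonal k, u q := by
        rw [← HasAntidiagonal.sigmaAntidiagonalEquivProd.tsum_eq u]
        exact (Summable.tsum_sigma' (fun k => (hasSum_fintype _).summable)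
          (HasAntidiagonal.sigmaAntidiagonalEquivProd.summable_iff.mpr hu)).trans
            (tsum_congr fun k => tsum_subtype (antidiagonal k) u)
    _ = ∑' k, a (k + 1) * ∑ q ∈ antidiagonal k, z ^ q.1 * y ^ q.2 := by
        refine tsum_congr fun k => ?_
        rw [mul_sum]
        refine sum_congr rfl fun q hq => ?_
        simp only [u, add_comm q.2, mem_antidiagonal.mp hq]
        ring

theorem tsum_mul_pow_sub_tsum_mul_pow (ha : Tendsto a atTop (𝓝 0)) (hy : ‖y‖ ≤ 1)
    (hz : ‖z‖ ≤ 1) :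
    ∑' n, a n * z ^ n - ∑' n, a n * y ^ n = (z - y) * ∑' j, diffQuotCoeff a y j * z ^ j := by
  have hz' := summable_mul_pow_of_tendsto_zero ha hz
  have hy' := summable_mul_pow_of_tendsto_zero ha hy
  have hdiff : Summable fun n => a n * (z ^ n - y ^ n) := by
    simpa only [mul_sub] using hz'.sub hy'
  calc ∑' n, a n * z ^ n - ∑' n, a n * y ^ n = ∑' n, a n * (z ^ n - y ^ n) := by
        rw [← hz'.tsum_sub hy']
        simp only [mul_sub]
    _ = ∑' k, a (k + 1) * (z ^ (k + 1) - y ^ (k + 1)) := by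
        rw [hdiff.tsum_eq_zero_add]
        simp
    _ = (z - y) * ∑' j, diffQuotCoeff a y j * z ^ j := by
        rw [tsum_diffQuotCoeff_mul_pow ha hy hz, ← tsum_mul_left]
        exact tsum_congr fun k => by rw [mul_left_comm, sub_mul_sum_antidiagonal_pow_mul_pow]

end PowerSeries

structure IsStrassmannIndex {E : Type*} [Norm E] (a : ℕ → E) (N : ℕ) : Prop where
  norm_le : ∀ n, ‖a n‖ ≤ ‖a N‖
  norm_lt : ∀ n, N < n → ‖a n‖ < ‖a N‖

section

variable {E : Type*} [NormedAddCommGroup E] {a : ℕ → E} {N : ℕ}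

lemma IsStrassmannIndex.norm_pos (hN : IsStrassmannIndex a N) : 0 < ‖a N‖ :=
  (norm_nonneg _).trans_lt (hN.norm_lt (N + 1) N.lt_succ_self)

lemma exists_isStrassmannIndex (ha : Tendsto a atTop (𝓝 0)) (hne : ∃ n, a n ≠ 0) :
    ∃ N, IsStrassmannIndex a N := by
  obtain ⟨n₀, hn₀⟩ := hne
  obtain ⟨k, hk⟩ := exists_forall_norm_le_of_tendsto_zero ha
  set S := {n | ∀ m, ‖a m‖ ≤ ‖a n‖}
  have hS : S.Finite := by
    have hpos : 0 < ‖a k‖ := (norm_pos_iff.mpr hn₀).trans_le (hk n₀)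
    have hlt := (tendsto_zero_iff_norm_tendsto_zero.mp ha).eventually (gt_mem_nhds hpos)
    rw [← Nat.cofinite_eq_atTop, eventually_cofinite] at hlt
    exact hlt.subset fun n hn => not_lt.mpr (hn k)
  have hmem : sSup S ∈ S := Nat.sSup_mem ⟨k, hk⟩ hS.bddAbove
  refine ⟨sSup S, hmem, fun n hn => (hmem n).lt_of_ne fun heq => ?_⟩
  have hnS : n ∈ S := fun m => heq ▸ hmem m
  exact hn.not_ge (le_csSup hS.bddAbove hnS)

end

section Strassmann

variable {K : Type*} [NormedField K] [IsUltrametricDist K] [CompleteSpace K] {a : ℕ → K}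
  {y z : K} {N : ℕ}

lemma IsStrassmannIndex.norm_tsum_mul_pow_eq (ha : Tendsto a atTop (𝓝 0))
    (h0 : IsStrassmannIndex a 0) (hz : ‖z‖ ≤ 1) : ‖∑' n, a n * z ^ n‖ = ‖a 0‖ := by
  rw [IsUltrametricDist.norm_tsum_eq_of_forall_norm_succ_lt (c := fun n => a n * z ^ n)
    (summable_mul_pow_of_tendsto_zero ha hz), pow_zero, mul_one]
  intro n
  rw [pow_zero, mul_one]
  exact (norm_mul_pow_le _ hz _).trans_lt (h0.norm_lt (n + 1) n.succ_pos)

lemma isStrassmannIndex_diffQuotCoeff (ha : Tendsto a atTop (𝓝 0)) (hy : ‖y‖ ≤ 1)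
    (hN : IsStrassmannIndex a (N + 1)) : IsStrassmannIndex (diffQuotCoeff a y) N := by
  have hbN : ‖diffQuotCoeff a y N‖ = ‖a (N + 1)‖ := by
    rw [diffQuotCoeff, IsUltrametricDist.norm_tsum_eq_of_forall_norm_succ_lt
      (summable_shift_mul_pow ha hy N)]
    · simp
    · intro m
      rw [zero_add, pow_zero, mul_one]
      exact (norm_mul_pow_le _ hy _).trans_lt (hN.norm_lt _ (by omega))
  constructor
  · intro n
    rw [hbN]
    exact IsUltrametricDist.norm_tsum_le_of_forall_le_of_nonneg (norm_nonneg _)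
      fun m => (norm_mul_pow_le _ hy m).trans (hN.norm_le _)
  · intro n hn
    rw [hbN]
    exact norm_diffQuotCoeff_lt hy fun m hm => hN.norm_lt m (by omega)

lemma zeros_subset_insert_zeros_diffQuotCoeff (ha : Tendsto a atTop (𝓝 0)) (hy : ‖y‖ ≤ 1)
    (hfy : ∑' n, a n * y ^ n = 0) :
    {z : K | ‖z‖ ≤ 1 ∧ ∑' n, a n * z ^ n = 0}
      ⊆ insert y {z : K | ‖z‖ ≤ 1 ∧ ∑' j, diffQuotCoeff a y j * z ^ j = 0} := by
  rintro z ⟨hz, hfz⟩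
  by_cases hzy : z = y
  · exact Or.inl hzy
  have hfactor := tsum_mul_pow_sub_tsum_mul_pow ha hy hz
  rw [hfz, hfy, sub_zero, eq_comm, mul_eq_zero, sub_eq_zero] at hfactor
  exact Or.inr ⟨hz, hfactor.resolve_left hzy⟩

theorem IsStrassmannIndex.encard_zeros_le (ha : Tendsto a atTop (𝓝 0))
    (hN : IsStrassmannIndex a N) : {z : K | ‖z‖ ≤ 1 ∧ ∑' n, a n * z ^ n = 0}.encard ≤ N := by
  induction N generalizing a with
  | zero =>
    refine (Set.encard_eq_zero.mpr (Set.eq_empty_of_forall_notMem ?_)).le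
    rintro z ⟨hz, hfz⟩
    have := hN.norm_tsum_mul_pow_eq ha hz
    rw [hfz, norm_zero] at this
    exact hN.norm_pos.ne this
  | succ N ih =>
    rcases Set.eq_empty_or_nonempty {z : K | ‖z‖ ≤ 1 ∧ ∑' n, a n * z ^ n = 0}
      with h | ⟨y, hy, hfy⟩
    · simp [h]
    calc _ ≤ (insert y {z : K | ‖z‖ ≤ 1 ∧ ∑' j, diffQuotCoeff a y j * z ^ j = 0}).encard :=
          Set.encard_le_encard (zeros_subset_insert_zeros_diffQuotCoeff ha hy hfy)
      _ ≤ N + 1 := (Set.encard_insert_le _ _).trans <| add_le_add_left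
          (ih (tendsto_diffQuotCoeff ha hy) (isStrassmannIndex_diffQuotCoeff ha hy hN)) 1
      _ = ↑(N + 1) := (Nat.cast_succ N).symm

end Strassmann

/-- A function on `ℤ_p` given by a power series `∑ aₙ zⁿ` with `aₙ ∈ ℚ_p`, `aₙ → 0`
(hence converging on all of `ℤ_p`), not all coefficients zero, has only finitely many
zeros in `ℤ_p`. -/
theorem padic_power_series_finitely_many_zeros (p : ℕ) [Fact p.Prime]
    (a : ℕ → ℚ_[p]) (ha : Filter.Tendsto a Filter.atTop (nhds 0))
    (hne : ∃ n, a n ≠ 0) :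
    {z : ℤ_[p] | ∑' n : ℕ, a n * (z : ℚ_[p]) ^ n = 0}.Finite := by
  obtain ⟨N, hN⟩ := exists_isStrassmannIndex ha hne
  have hfin := Set.finite_of_encard_le_coe (hN.encard_zeros_le ha)
  exact (hfin.preimage Subtype.val_injective.injOn).subset fun z hz => ⟨z.2, hz⟩
end

section
/- Let F, G, H : C → Set be functors with Isom(F,G) and Isom(F,H) nonempty. Then every isomorphism of right Aut(F)-sets Isom(F,G) ≅ Isom(F,H) is induced by composition with a unique natural isomorphism G ≅ H. -/
/-!
`Isom(F, G)` is a torsor under `Aut(F)`: once `φ₀ : F ≅ G` is fixed, every `φ` equals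
`(φ ≪≫ φ₀⁻¹) ≪≫ φ₀`, so equivariance forces `Φ φ = φ ≪≫ (φ₀⁻¹ ≪≫ Φ φ₀)`.
-/

open CategoryTheory

namespace CategoryTheory.Iso

variable {C : Type*} [Category C] {X Y Z : C}

theorem apply_eq_trans_of_equivariant (φ₀ : X ≅ Y) {Φ : (X ≅ Y) → (X ≅ Z)}
    (hΦ : ∀ (g : X ≅ X) (φ : X ≅ Y), Φ (g ≪≫ φ) = g ≪≫ Φ φ) (φ : X ≅ Y) :
    Φ φ = φ ≪≫ φ₀.symm ≪≫ Φ φ₀ := by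
  have hφ : φ = (φ ≪≫ φ₀.symm) ≪≫ φ₀ := by simp
  rw [hφ, hΦ]
  simp

theorem existsUnique_apply_eq_trans_of_equivariant (φ₀ : X ≅ Y) {Φ : (X ≅ Y) → (X ≅ Z)}
    (hΦ : ∀ (g : X ≅ X) (φ : X ≅ Y), Φ (g ≪≫ φ) = g ≪≫ Φ φ) :
    ∃! h : Y ≅ Z, ∀ φ : X ≅ Y, Φ φ = φ ≪≫ h := by
  refine ⟨φ₀.symm ≪≫ Φ φ₀, apply_eq_trans_of_equivariant φ₀ hΦ, fun h hh => ?_⟩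
  rw [hh φ₀, ← trans_assoc, symm_self_id, refl_trans]

end CategoryTheory.Iso

theorem autEquivariant_bijection_isom_induced_by_iso_general {C : Type u} [Category.{v} C]
    (F G H : C ⥤ Type w) (hG : Nonempty (F ≅ G))
    (Φ : (F ≅ G) ≃ (F ≅ H))
    (hΦ : ∀ (g : F ≅ F) (φ : F ≅ G), Φ (g ≪≫ φ) = g ≪≫ Φ φ) :
    ∃! h : G ≅ H, ∀ φ : F ≅ G, Φ φ = φ ≪≫ h :=
  let ⟨φ₀⟩ := hG
  Iso.existsUnique_apply_eq_trans_of_equivariant φ₀ hΦ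

/-- Any isomorphism of right `Aut(F)`-sets `Isom(F,G) ≅ Isom(F,H)` is induced by
composition with a unique natural isomorphism `G ≅ H`. -/
theorem autEquivariant_bijection_isom_induced_by_iso {C : Type u} [Category.{v} C]
    (F G H : C ⥤ Type w) (hG : Nonempty (F ≅ G)) (hH : Nonempty (F ≅ H))
    (Φ : (F ≅ G) ≃ (F ≅ H))
    (hΦ : ∀ (g : F ≅ F) (φ : F ≅ G), Φ (g ≪≫ φ) = g ≪≫ Φ φ) :
    ∃! h : G ≅ H, ∀ φ : F ≅ G, Φ φ = φ ≪≫ h :=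
  autEquivariant_bijection_isom_induced_by_iso_general F G H hG Φ hΦ
end

section
/- With L = V ⊕ Z a 2-step nilpotent Lie algebra as above with BCH group law, the formula λ · (ξ₁, ξ₂) = (λξ₁, λ²ξ₂) for λ a scalar defines an action of the multiplicative monoid of the base field on the set of 1-cocycles G → L, i.e., if (ξ₁, ξ₂) is a cocycle then so is (λξ₁, λ²ξ₂). -/
/-- The Baker–Campbell–Hausdorff product `u * v = u + v + ½[u,v]` on the 2-step nilpotent
Lie algebra `L = V ⊕ Z`. -/
def bchProd {k V Z : Type*} [Field k] [AddCommGroup V] [Module k V]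
    [AddCommGroup Z] [Module k Z] (B : V →ₗ[k] V →ₗ[k] Z) (u v : V × Z) : V × Z :=
  (u.1 + v.1, u.2 + v.2 + (1 / 2 : k) • B u.1 v.1)

/-! The dilation `(v, z) ↦ (λv, λ²z)` is an endomorphism of the BCH group law, since the
bracket term is bilinear and hence scales by `λ²`; it also commutes with the `G`-action.
Applying it to both sides of the cocycle identity gives the cocycle identity for the dilated
pair. -/

section Dilation

variable {k V Z : Type*} [Field k] [AddCommGroup V] [Module k V] [AddCommGroup Z] [Module k Z]

def bchDilate (lam : k) (u : V × Z) : V × Z :=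
  (lam • u.1, lam ^ 2 • u.2)

theorem bchProd_bchDilate (B : V →ₗ[k] V →ₗ[k] Z) (lam : k) (u v : V × Z) :
    bchProd B (bchDilate lam u) (bchDilate lam v) = bchDilate lam (bchProd B u v) := by
  simp only [bchProd, bchDilate, map_smul, LinearMap.smul_apply, smul_add, smul_smul,
    Prod.mk.injEq, true_and]
  ring_nf

end Dilation

theorem bch_cocycle_scalar_action_general {k V Z G : Type*} [Field k]
    [AddCommGroup V] [Module k V] [AddCommGroup Z] [Module k Z] [Group G]
    [DistribMulAction G V] [DistribMulAction G Z]
    [SMulCommClass G k V] [SMulCommClass G k Z]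
    (B : V →ₗ[k] V →ₗ[k] Z)
    (ξ₁ : G → V) (ξ₂ : G → Z)
    (hcocycle : ∀ g h : G, (ξ₁ (g * h), ξ₂ (g * h)) =
        bchProd B (ξ₁ g, ξ₂ g) (g • ξ₁ h, g • ξ₂ h))
    (lam : k) :
    ∀ g h : G, (lam • ξ₁ (g * h), (lam ^ 2) • ξ₂ (g * h)) =
      bchProd B (lam • ξ₁ g, (lam ^ 2) • ξ₂ g)
        (g • (lam • ξ₁ h), g • ((lam ^ 2) • ξ₂ h)) := by
  intro g h
  rw [smul_comm g lam, smul_comm g (lam ^ 2)]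
  exact (congrArg (bchDilate lam) (hcocycle g h)).trans
    (bchProd_bchDilate B lam _ (g • ξ₁ h, g • ξ₂ h)).symm

/-- The formula `λ · (ξ₁, ξ₂) = (λξ₁, λ²ξ₂)` preserves the set of 1-cocycles of `G` with
values in the BCH group `L = V ⊕ Z`, so defines an action of the multiplicative monoid of
the base field on cocycles. -/
theorem bch_cocycle_scalar_action {k V Z G : Type*} [Field k] [CharZero k]
    [AddCommGroup V] [Module k V] [AddCommGroup Z] [Module k Z] [Group G]
    [DistribMulAction G V] [DistribMulAction G Z]
    [SMulCommClass G k V] [SMulCommClass G k Z]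
    (B : V →ₗ[k] V →ₗ[k] Z)
    (hBequiv : ∀ (g : G) (v w : V), g • (B v w) = B (g • v) (g • w))
    (ξ₁ : G → V) (ξ₂ : G → Z)
    (hcocycle : ∀ g h : G, (ξ₁ (g * h), ξ₂ (g * h)) =
        bchProd B (ξ₁ g, ξ₂ g) (g • ξ₁ h, g • ξ₂ h))
    (lam : k) :
    ∀ g h : G, (lam • ξ₁ (g * h), (lam ^ 2) • ξ₂ (g * h)) =
      bchProd B (lam • ξ₁ g, (lam ^ 2) • ξ₂ g)
        (g • (lam • ξ₁ h), g • ((lam ^ 2) • ξ₂ h)) :=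
  bch_cocycle_scalar_action_general B ξ₁ ξ₂ hcocycle lam
end
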